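/- arXiv:math/0304124 — 2 statements merged into one kernel-verified Lean document; each statement's English description precedes it below -/
import Mathlib

section
/- For every k > 0 and n ≥ 2, suppose: (a) for general points, the existence of a degree-d hypersurface with multiplicities m_i at p_i implies the existence, for each permutation σ, of a degree-d hypersurface with multiplicities m_{σ(i)} at p_i; (b) (Hochster–Huneke) if I is the radical ideal of r points in P^n and a polynomial of degree (k+n)D has multiplicity ≥ (k+n)M at each point, then there is a polynomial of degree t ≤ (k+n)D/M with multiplicity ≥ k+1 at each point; (c) (Alexander–Hirschowitz) there exists s_k(n) such that for r ≥ s_k(n) general points, any hypersurface with multiplicity ≥ k+1 at each of the r points has degree ≥ (k+1)·r^{1/n}. Then for r ≥ s_k(n), all m = (m_1,...,m_r), and general points p_1,...,p_r: α_m(p_1,...,p_r) ≥ (Σ m_i)/r^{(n-1)/n} · (k+1)/(k+n). -/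
/-!
Multiplying together the forms obtained from a degree-`d` form by permuting the
multiplicities gives a form of degree `r! d` with the same multiplicity
`M = (r - 1)! Σ mᵢ` at every point. Hochster–Huneke applied to its `(K + n)`-th power
gives a form of degree `t ≤ (K + n) r! d / M` with multiplicity `K + 1` at every point,
and Alexander–Hirschowitz bounds `t` below by `(K + 1) r^{1/n}`.
-/

open MvPolynomial

open scoped Nat

/-- The homogeneous ideal of the point `p = [ξ₀ : ⋯ : ξₙ]`. -/
noncomputable def pointIdeal {n : ℕ} {k : Type*} [Field k] (ξ : Fin (n + 1) → k) :
    Ideal (MvPolynomial (Fin (n + 1)) k) :=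
  Ideal.span {f | ∃ i j : Fin (n + 1), f = C (ξ i) * X j - C (ξ j) * X i}

theorem Ideal.prod_mem_pow_sum {R ι : Type*} [CommSemiring R] (I : Ideal R) {s : Finset ι}
    {f : ι → R} {e : ι → ℕ} (h : ∀ i ∈ s, f i ∈ I ^ e i) :
    ∏ i ∈ s, f i ∈ I ^ ∑ i ∈ s, e i := by
  rw [← Finset.prod_pow_eq_pow_sum]
  exact Ideal.prod_mem_prod h

theorem Equiv.Perm.sum_apply_eq_sum_apply {ι M : Type*} [Fintype ι] [DecidableEq ι]
    [AddCommMonoid M] (m : ι → M) (i j : ι) :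
    ∑ σ : Perm ι, m (σ i) = ∑ σ : Perm ι, m (σ j) :=
  Fintype.sum_equiv (Equiv.mulRight (swap i j)) _ _ fun σ => by simp [Perm.mul_apply]

/-- Each value of `m` is hit by `σ i` for exactly `(card ι - 1)!` permutations `σ`. -/
theorem Equiv.Perm.card_mul_sum_apply {ι M : Type*} [Fintype ι] [DecidableEq ι]
    [AddCommMonoid M] (m : ι → M) (i : ι) :
    Fintype.card ι • ∑ σ : Perm ι, m (σ i) = (Fintype.card ι)! • ∑ j, m j := by
  calc Fintype.card ι • ∑ σ : Perm ι, m (σ i)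
      = ∑ j : ι, ∑ σ : Perm ι, m (σ j) := by
        simp only [sum_apply_eq_sum_apply m _ i, Finset.sum_const, Finset.card_univ]
    _ = ∑ σ : Perm ι, ∑ j, m j := by
        rw [Finset.sum_comm]
        exact Finset.sum_congr rfl fun σ _ => Equiv.sum_comp σ m
    _ = (Fintype.card ι)! • ∑ j, m j := by
        simp only [Finset.sum_const, Finset.card_univ, Fintype.card_perm]

namespace MvPolynomial

variable {σ R ι : Type*} [CommRing R]

/-- A nonzero form of degree `d` lying in `I i ^ m i` for every `i`: for point ideals, a
hypersurface of degree `d` with multiplicity at least `m i` at the `i`-th point. -/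
def HasVanishingForm (I : ι → Ideal (MvPolynomial σ R)) (d : ℕ) (m : ι → ℕ) : Prop :=
  ∃ F : MvPolynomial σ R, F ≠ 0 ∧ F.IsHomogeneous d ∧ ∀ i, F ∈ I i ^ m i

variable [IsDomain R] {I : ι → Ideal (MvPolynomial σ R)} {d : ℕ}

theorem HasVanishingForm.pow {m : ι → ℕ} (h : HasVanishingForm I d m) (e : ℕ) :
    HasVanishingForm I (e * d) (fun i => e * m i) := by
  obtain ⟨F, hF0, hFd, hFm⟩ := h
  refine ⟨F ^ e, pow_ne_zero e hF0, mul_comm d e ▸ hFd.pow e, fun i => ?_⟩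
  change F ^ e ∈ I i ^ (e * m i)
  rw [mul_comm e, pow_mul]
  exact Ideal.pow_mem_pow (hFm i) e

theorem HasVanishingForm.prod {J : Type*} [Fintype J] {m : J → ι → ℕ}
    (h : ∀ j, HasVanishingForm I d (m j)) :
    HasVanishingForm I (Fintype.card J * d) (fun i => ∑ j, m j i) := by
  choose F hF0 hFd hFm using h
  refine ⟨∏ j, F j, Finset.prod_ne_zero_iff.2 fun j _ => hF0 j, ?_,
    fun i => Ideal.prod_mem_pow_sum _ fun j _ => hFm j i⟩
  have := IsHomogeneous.prod Finset.univ F (fun _ => d) fun j _ => hFd j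
  rwa [Finset.sum_const, smul_eq_mul, Finset.card_univ] at this

theorem HasVanishingForm.symmetrize [Fintype ι] [DecidableEq ι] {m : ι → ℕ}
    (h : ∀ τ : Equiv.Perm ι, HasVanishingForm I d (fun i => m (τ i))) (i₀ : ι) :
    HasVanishingForm I ((Fintype.card ι)! * d) (fun _ => ∑ τ : Equiv.Perm ι, m (τ i₀)) := by
  have := HasVanishingForm.prod h
  rw [Fintype.card_perm] at this
  simpa only [Equiv.Perm.sum_apply_eq_sum_apply m _ i₀] using this

end MvPolynomial

theorem div_rpow_mul_div_le_of_mul_rpow_le {n r a b S d : ℝ} (hn : n ≠ 0) (hr : 0 < r)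
    (hb : 0 < b) (h : a * r ^ (1 / n) * S ≤ b * (r * d)) :
    S / r ^ ((n - 1) / n) * (a / b) ≤ d := by
  have hc : 0 < r ^ (1 / n) := Real.rpow_pos_of_pos hr _
  have hexp : r ^ ((n - 1) / n) = r / r ^ (1 / n) := by
    rw [show (n - 1) / n = 1 - 1 / n by field_simp, Real.rpow_sub hr, Real.rpow_one]
  rw [hexp, div_div_eq_mul_div, div_mul_div_comm, div_le_iff₀ (by positivity)]
  linarith

theorem alpha_lower_bound_of_HH_AH_general
    {k : Type*} [Field k] {n r : ℕ} (hn : 2 ≤ n)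
    (K : ℕ)
    (p : Fin r → (Fin (n + 1) → k))
    (ha : ∀ (d : ℕ) (m : Fin r → ℕ),
      (∃ F : MvPolynomial (Fin (n + 1)) k, F ≠ 0 ∧ F.IsHomogeneous d ∧
        ∀ i, F ∈ (pointIdeal (p i)) ^ (m i)) →
      ∀ σ : Equiv.Perm (Fin r),
        ∃ F : MvPolynomial (Fin (n + 1)) k, F ≠ 0 ∧ F.IsHomogeneous d ∧
          ∀ i, F ∈ (pointIdeal (p i)) ^ (m (σ i)))
    (hb : ∀ D M : ℕ, 0 < M →
      (∃ G : MvPolynomial (Fin (n + 1)) k, G ≠ 0 ∧ G.IsHomogeneous ((K + n) * D) ∧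
        ∀ i, G ∈ (pointIdeal (p i)) ^ ((K + n) * M)) →
      ∃ t : ℕ, (t : ℝ) * M ≤ (K + n) * D ∧
        ∃ H : MvPolynomial (Fin (n + 1)) k, H ≠ 0 ∧ H.IsHomogeneous t ∧
          ∀ i, H ∈ (pointIdeal (p i)) ^ (K + 1))
    (hc : ∀ t : ℕ,
      (∃ H : MvPolynomial (Fin (n + 1)) k, H ≠ 0 ∧ H.IsHomogeneous t ∧
        ∀ i, H ∈ (pointIdeal (p i)) ^ (K + 1)) →
      ((K : ℝ) + 1) * (r : ℝ) ^ ((1 : ℝ) / n) ≤ t) :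
    ∀ (d : ℕ) (m : Fin r → ℕ),
      (∃ F : MvPolynomial (Fin (n + 1)) k, F ≠ 0 ∧ F.IsHomogeneous d ∧
        ∀ i, F ∈ (pointIdeal (p i)) ^ (m i)) →
      (∑ i, (m i : ℝ)) / (r : ℝ) ^ (((n : ℝ) - 1) / n) * (((K : ℝ) + 1) / ((K : ℝ) + n))
        ≤ d := by
  intro d m hF
  rcases Nat.eq_zero_or_pos (∑ i, m i) with hS | hS
  · rw [← Nat.cast_sum, hS, Nat.cast_zero, zero_div, zero_mul]
    exact d.cast_nonneg
  obtain ⟨i₀, -, -⟩ := Finset.exists_ne_zero_of_sum_ne_zero hS.ne'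
  have hsym := HasVanishingForm.symmetrize (ha d m hF) i₀
  have hrM := Equiv.Perm.card_mul_sum_apply m i₀
  rw [Fintype.card_fin] at hsym hrM
  rw [smul_eq_mul, smul_eq_mul] at hrM
  set M := ∑ τ : Equiv.Perm (Fin r), m (τ i₀)
  have hM : 0 < M := Nat.pos_of_mul_pos_left (a := r) (by rw [hrM]; positivity)
  obtain ⟨t, htM, hH⟩ := hb (r ! * d) M hM (hsym.pow (K + n))
  have hMt : ((K : ℝ) + 1) * r ^ (1 / n : ℝ) * M ≤ (K + n) * (r ! * d) :=
    (mul_le_mul_of_nonneg_right (hc t hH) M.cast_nonneg).trans (by exact_mod_cast htM)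
  have hrM' : (r : ℝ) * M = r ! * ∑ i, (m i : ℝ) := by exact_mod_cast hrM
  have hn0 : (0 : ℝ) < n := by exact_mod_cast (by omega : 0 < n)
  refine div_rpow_mul_div_le_of_mul_rpow_le hn0.ne' (by exact_mod_cast i₀.pos) (by positivity) ?_
  refine le_of_mul_le_mul_left ?_ (Nat.cast_pos.2 r.factorial_pos)
  calc (r ! : ℝ) * ((K + 1) * r ^ (1 / n : ℝ) * ∑ i, (m i : ℝ))
      = r * ((K + 1) * r ^ (1 / n : ℝ) * M) := by
        linear_combination -((K + 1) * r ^ (1 / n : ℝ)) * hrM'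
    _ ≤ r * ((K + n) * (r ! * d)) := by gcongr
    _ = r ! * ((K + n) * (r * d)) := by ring

/-- Key estimate in the proof of Corollary 1.4. Fix `K > 0`, `n ≥ 2`, and `r` general
points `p₁,…,p_r` of `ℙⁿ`. Assume:
(a) (genericity/symmetry) the existence of a degree-`d` form with multiplicities `mᵢ`
    at the `pᵢ` implies, for each permutation `σ`, the existence of a degree-`d` form
    with multiplicity `m_{σ(i)}` at `pᵢ`;
(b) (Hochster–Huneke) a nonzero form of degree `(K+n)·D` with multiplicity at least
    `(K+n)·M` at every point produces a nonzero form of degree `t ≤ (K+n)·D/M` with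
    multiplicity at least `K+1` at every point;
(c) (Alexander–Hirschowitz) any nonzero form with multiplicity at least `K+1` at every
    point has degree at least `(K+1)·r^{1/n}` (valid for `r ≥ s_K(n)` general points).

Then `α_m(p₁,…,p_r) ≥ (Σ mᵢ) / r^{(n-1)/n} · (K+1)/(K+n)`; i.e. every nonzero
degree-`d` form with multiplicities `mᵢ` at the `pᵢ` satisfies this lower bound on `d`. -/
theorem alpha_lower_bound_of_HH_AH
    {k : Type*} [Field k] [IsAlgClosed k] {n r : ℕ} (hn : 2 ≤ n) (hr : 1 ≤ r)
    (K : ℕ) (hK : 0 < K)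
    (p : Fin r → (Fin (n + 1) → k)) (hp0 : ∀ i, p i ≠ 0)
    (hdist : ∀ i j : Fin r, i ≠ j → ∀ c : k, p j ≠ c • p i)
    (ha : ∀ (d : ℕ) (m : Fin r → ℕ),
      (∃ F : MvPolynomial (Fin (n + 1)) k, F ≠ 0 ∧ F.IsHomogeneous d ∧
        ∀ i, F ∈ (pointIdeal (p i)) ^ (m i)) →
      ∀ σ : Equiv.Perm (Fin r),
        ∃ F : MvPolynomial (Fin (n + 1)) k, F ≠ 0 ∧ F.IsHomogeneous d ∧
          ∀ i, F ∈ (pointIdeal (p i)) ^ (m (σ i)))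
    (hb : ∀ D M : ℕ, 0 < M →
      (∃ G : MvPolynomial (Fin (n + 1)) k, G ≠ 0 ∧ G.IsHomogeneous ((K + n) * D) ∧
        ∀ i, G ∈ (pointIdeal (p i)) ^ ((K + n) * M)) →
      ∃ t : ℕ, (t : ℝ) * M ≤ (K + n) * D ∧
        ∃ H : MvPolynomial (Fin (n + 1)) k, H ≠ 0 ∧ H.IsHomogeneous t ∧
          ∀ i, H ∈ (pointIdeal (p i)) ^ (K + 1))
    (hc : ∀ t : ℕ,
      (∃ H : MvPolynomial (Fin (n + 1)) k, H ≠ 0 ∧ H.IsHomogeneous t ∧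
        ∀ i, H ∈ (pointIdeal (p i)) ^ (K + 1)) →
      ((K : ℝ) + 1) * (r : ℝ) ^ ((1 : ℝ) / n) ≤ t) :
    ∀ (d : ℕ) (m : Fin r → ℕ),
      (∃ F : MvPolynomial (Fin (n + 1)) k, F ≠ 0 ∧ F.IsHomogeneous d ∧
        ∀ i, F ∈ (pointIdeal (p i)) ^ (m i)) →
      (∑ i, (m i : ℝ)) / (r : ℝ) ^ (((n : ℝ) - 1) / n) * (((K : ℝ) + 1) / ((K : ℝ) + n))
        ≤ d :=
  alpha_lower_bound_of_HH_AH_general hn K p ha hb hc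
end

section
/- Let k be a field, and let x_1,...,x_n, with n ≥ 2, be formal variables. For ξ = (ξ_1,...,ξ_n) ∈ k^n nonzero with ξ_i ≠ 0 for some i, let I_ξ ⊆ k[[x_1,...,x_n]] be the ideal generated by ξ_i x_j − ξ_j x_i for all i,j. Then the quotient k[[x_1,...,x_n]]/I_ξ is isomorphic to a formal power series ring in one variable k[[t]]; in particular I_ξ is a prime ideal and the quotient is a regular local ring of dimension 1. -/
/-- The ideal of the line through the origin in direction `ξ`: generated by
`ξᵢ xⱼ − ξⱼ xᵢ` in `k[[x₁,…,xₙ]]`. -/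
noncomputable def lineIdeal {n : ℕ} {k : Type*} [Field k] (ξ : Fin n → k) :
    Ideal (MvPowerSeries (Fin n) k) :=
  Ideal.span {f | ∃ i j : Fin n,
    f = MvPowerSeries.C (σ := Fin n) (R := k) (ξ i) * MvPowerSeries.X j -
        MvPowerSeries.C (σ := Fin n) (R := k) (ξ j) * MvPowerSeries.X i}

/-!
Fix `ξ i ≠ 0` and put `c = ξ / ξ i`. Substituting `xⱼ ↦ cⱼ t` is a surjection
`k[[x]] → k[[t]]`, split by `t ↦ xᵢ`, and it kills the generators `xⱼ - cⱼ xᵢ` of `I_ξ`.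
Conversely, modulo `(xⱼ : j ≠ i)` every series is congruent to a series in `xᵢ` alone, and the
linear automorphism `xⱼ ↦ xⱼ - cⱼ xᵢ` (`j ≠ i`) fixes series in `xᵢ` and carries that ideal into
`I_ξ`. So every series is congruent modulo `I_ξ` to the image of some `p ∈ k[[t]]`, and `p = 0`
if the series lies in the kernel: the kernel is exactly `I_ξ`.
-/

open MvPowerSeries

namespace MvPowerSeries

variable {σ R : Type*} [CommRing R]

theorem mem_ideal_span_X_image_of_coeff_eq_zero (t : Finset σ) {g : MvPowerSeries σ R}
    (hg : ∀ d : σ →₀ ℕ, (∀ j ∈ t, d j = 0) → coeff d g = 0) :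
    g ∈ Ideal.span (X '' (t : Set σ)) := by
  classical
  induction t using Finset.induction_on generalizing g with
  | empty =>
    have hg0 : g = 0 := ext fun d => by simpa using hg d (by simp)
    simp [hg0]
  | insert j t _ ih =>
    let r : MvPowerSeries σ R := fun d => if d j = 0 then coeff d g else 0
    have hr : r ∈ Ideal.span (X '' (t : Set σ)) := ih fun d hd => by
      change (if d j = 0 then coeff d g else 0) = 0
      split_ifs with hdj
      · exact hg d (Finset.forall_mem_insert _ _ _ |>.mpr ⟨hdj, hd⟩)
      · rfl
    obtain ⟨q, hq⟩ : X j ∣ g - r := X_dvd_iff.mpr fun d hdj => by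
      change coeff d g - (if d j = 0 then coeff d g else 0) = 0
      simp [hdj]
    have hgr : g = X j * q + r := by rw [← hq, sub_add_cancel]
    rw [hgr, Finset.coe_insert, Set.image_insert_eq, Ideal.span_insert]
    exact Ideal.add_mem _ (Ideal.mem_sup_left (Ideal.mem_span_singleton'.mpr ⟨q, mul_comm _ _⟩))
      (Ideal.mem_sup_right hr)

variable [Finite σ]

theorem sub_toMvPowerSeries_killCompl_mem_ideal_span_X (i : σ)
    (f : MvPowerSeries σ R) :
    f - PowerSeries.toMvPowerSeries i (killCompl (Function.Embedding.punit i : Unit ↪ σ) f) ∈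
      Ideal.span (X '' {i}ᶜ) := by
  classical
  have := Fintype.ofFinite σ
  set e : Unit ↪ σ := Function.Embedding.punit i
  have h := mem_ideal_span_X_image_of_coeff_eq_zero (Finset.univ.erase i)
    (g := f - PowerSeries.toMvPowerSeries i (killCompl e f))
  rw [Finset.coe_erase, Finset.coe_univ, Set.sdiff_eq_compl_inter, Set.inter_univ] at h
  refine h fun d hd => ?_
  have hd' : d = Finsupp.embDomain e (Finsupp.single () (d i)) := by
    rw [Finsupp.embDomain_single, show e () = i from rfl]
    ext l
    by_cases hl : l = i
    · simp [hl]
    · simp [hd l (by simp [hl]), Ne.symm hl]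
  change coeff d (f - rename e (killCompl e f)) = 0
  rw [map_sub, hd', coeff_embDomain_rename, coeff_killCompl, sub_self]

section Shear

variable (c : σ → R) (i : σ)

theorem hasSubst_shear : HasSubst fun j => X j + C (c j) * X i :=
  hasSubst_of_constantCoeff_zero fun j => by simp

noncomputable def shear : MvPowerSeries σ R →ₐ[R] MvPowerSeries σ R :=
  substAlgHom (hasSubst_shear c i)

theorem shear_X (j : σ) : shear c i (X j) = X j + C (c j) * X i :=
  substAlgHom_X _ j

@[simp]
theorem shear_C (r : R) : shear c i (C r) = C r := by
  rw [c_eq_algebraMap, AlgHom.commutes]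

variable {c i}

theorem shear_toMvPowerSeries (hc : c i = 0) (p : PowerSeries R) :
    shear c i (p.toMvPowerSeries i) = p.toMvPowerSeries i := by
  rw [shear, substAlgHom_apply, PowerSeries.subst_toMvPowerSeries (hasSubst_shear c i), hc,
    map_zero, zero_mul, add_zero, PowerSeries.toMvPowerSeries_eq_subst]

theorem shear_neg_shear (hc : c i = 0) (f : MvPowerSeries σ R) :
    shear (-c) i (shear c i f) = f := by
  have hX : ∀ j, shear (-c) i (X j + C (c j) * X i) = X j := fun j => by
    simp [shear_X, hc, map_add, map_mul]
  rw [shear, shear, substAlgHom_comp_substAlgHom_apply, substAlgHom_apply]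
  have hcomp : (fun j => substAlgHom (hasSubst_shear (-c) i) (X j + C (c j) * X i)) = X :=
    funext hX
  rw [hcomp, subst_self, id]

end Shear

theorem exists_sub_toMvPowerSeries_mem_ideal_span (c : σ → R) (i : σ)
    (f : MvPowerSeries σ R) : ∃ p : PowerSeries R,
      f - p.toMvPowerSeries i ∈ Ideal.span (Set.range fun j => X j - C (c j) * X i) := by
  classical
  set c' := Function.update c i 0
  have hc' : c' i = 0 := Function.update_self ..
  set g := shear c' i f
  refine ⟨killCompl (Function.Embedding.punit i : Unit ↪ σ) g, ?_⟩
  have hmem := Ideal.mem_map_of_mem (shear (-c') i)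
    (sub_toMvPowerSeries_killCompl_mem_ideal_span_X i g)
  rw [map_sub, shear_neg_shear hc', shear_toMvPowerSeries (by simp [hc']), Ideal.map_span,
    ← Set.image_comp] at hmem
  refine Ideal.span_mono ?_ hmem
  rintro _ ⟨j, hj, rfl⟩
  refine ⟨j, ?_⟩
  simp [shear_X, c', Function.update_of_ne hj, sub_eq_add_neg]

section RestrictLine

variable (c : σ → R)

theorem hasSubst_restrictLine : HasSubst fun j => c j • (PowerSeries.X : PowerSeries R) :=
  hasSubst_of_constantCoeff_zero fun j => by simp [PowerSeries.X]

noncomputable def restrictLine : MvPowerSeries σ R →ₐ[R] PowerSeries R :=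
  substAlgHom (hasSubst_restrictLine c)

theorem restrictLine_X (j : σ) : restrictLine c (X j) = c j • PowerSeries.X :=
  substAlgHom_X _ j

@[simp]
theorem restrictLine_C (r : R) : restrictLine c (C r) = PowerSeries.C r := by
  rw [c_eq_algebraMap, AlgHom.commutes]
  rfl

variable {c} {i : σ}

theorem restrictLine_toMvPowerSeries (hc : c i = 1) (p : PowerSeries R) :
    restrictLine c (p.toMvPowerSeries i) = p := by
  rw [restrictLine, substAlgHom_apply,
    PowerSeries.subst_toMvPowerSeries (hasSubst_restrictLine c), hc, one_smul, PowerSeries.X_subst]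

theorem restrictLine_surjective (hc : c i = 1) : Function.Surjective (restrictLine c) :=
  fun p => ⟨_, restrictLine_toMvPowerSeries hc p⟩

theorem ker_restrictLine (hc : c i = 1) :
    RingHom.ker (restrictLine c) = Ideal.span (Set.range fun j => X j - C (c j) * X i) := by
  have hle :
      Ideal.span (Set.range fun j => X j - C (c j) * X i) ≤ RingHom.ker (restrictLine c) := by
    rw [Ideal.span_le]
    rintro _ ⟨j, rfl⟩
    simp [restrictLine_X, hc, PowerSeries.smul_eq_C_mul]
  refine le_antisymm (fun f hf => ?_) hle
  obtain ⟨p, hp⟩ := exists_sub_toMvPowerSeries_mem_ideal_span c i f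
  have hp0 : p = 0 := by
    simpa [RingHom.mem_ker.mp hf, restrictLine_toMvPowerSeries hc]
      using RingHom.mem_ker.mp (hle hp)
  simpa [hp0] using hp

end RestrictLine

end MvPowerSeries

theorem lineIdeal_eq_span {n : ℕ} {k : Type*} [Field k] {ξ : Fin n → k} {i : Fin n}
    (hi : ξ i ≠ 0) :
    lineIdeal ξ = Ideal.span (Set.range fun j => X j - C (ξ j / ξ i) * X i) := by
  apply le_antisymm <;> rw [lineIdeal, Ideal.span_le]
  · rintro _ ⟨a, b, rfl⟩
    have key :
        C (ξ a) * C (ξ b / ξ i) = (C (ξ b) * C (ξ a / ξ i) : MvPowerSeries (Fin n) k) := by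
      rw [← map_mul, ← map_mul, mul_div_left_comm]
    have hcomb : C (ξ a) * X b - C (ξ b) * X a =
        C (ξ a) * (X b - C (ξ b / ξ i) * X i) - C (ξ b) * (X a - C (ξ a / ξ i) * X i) := by
      linear_combination key * X i
    rw [SetLike.mem_coe, hcomb]
    exact Ideal.sub_mem _ (Ideal.mul_mem_left _ _ (Ideal.subset_span ⟨b, rfl⟩))
      (Ideal.mul_mem_left _ _ (Ideal.subset_span ⟨a, rfl⟩))
  · rintro _ ⟨j, rfl⟩
    dsimp only
    have hcomb : X j - C (ξ j / ξ i) * X i =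
        C (ξ i)⁻¹ * (C (ξ i) * X j - C (ξ j) * X i : MvPowerSeries (Fin n) k) := by
      have h1 : C (ξ i)⁻¹ * C (ξ i) = (1 : MvPowerSeries (Fin n) k) := by
        rw [← map_mul, inv_mul_cancel₀ hi, map_one]
      have h2 : C (ξ i)⁻¹ * C (ξ j) = (C (ξ j / ξ i) : MvPowerSeries (Fin n) k) := by
        rw [← map_mul, div_eq_inv_mul]
      linear_combination (-X j) * h1 + X i * h2
    rw [SetLike.mem_coe, hcomb]
    exact Ideal.mul_mem_left _ _ (Ideal.subset_span ⟨i, j, rfl⟩)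

theorem line_quotient_powerSeries_general {n : ℕ} {k : Type*} [Field k]
    (ξ : Fin n → k) (hξ : ξ ≠ 0) :
    Nonempty ((MvPowerSeries (Fin n) k ⧸ lineIdeal ξ) ≃+* PowerSeries k) ∧
      (lineIdeal ξ).IsPrime := by
  obtain ⟨i, hi⟩ := Function.ne_iff.mp hξ
  set c : Fin n → k := fun j => ξ j / ξ i
  have hc : c i = 1 := div_self hi
  have hker : RingHom.ker (restrictLine c) = lineIdeal ξ := by
    rw [ker_restrictLine hc, lineIdeal_eq_span hi]
  exact ⟨⟨(Ideal.quotEquivOfEq hker.symm).trans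
    (RingHom.quotientKerEquivOfSurjective (restrictLine_surjective hc))⟩,
    hker ▸ RingHom.ker_isPrime _⟩

/-- The line through the origin in direction `ξ ≠ 0` is a smooth curve germ:
`k[[x₁,…,xₙ]]/I_ξ` is isomorphic to a formal power series ring in one variable `k[[t]]`
(via `xⱼ ↦ ξⱼ·t` after normalizing); in particular `I_ξ` is prime, and the quotient
is a regular local ring of dimension 1 (as `k[[t]]` is). -/
theorem line_quotient_powerSeries {n : ℕ} (hn : 2 ≤ n) {k : Type*} [Field k]
    (ξ : Fin n → k) (hξ : ξ ≠ 0) :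
    Nonempty ((MvPowerSeries (Fin n) k ⧸ lineIdeal ξ) ≃+* PowerSeries k) ∧
      (lineIdeal ξ).IsPrime :=
  line_quotient_powerSeries_general ξ hξ
end
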